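/- arXiv:1704.00814 — 8 statements merged into one kernel-verified Lean document; each statement's English description precedes it below -/
import Mathlib

section
/- For every n ∈ ℕ and every permutation p of Fin n, inv(p) ≤ (n − 1) · |{i : p(i) ≠ i}|. (Equivalently, the normalized Coxeter length ℓ_C(p) = 2·inv(p)/(n(n−1)) satisfies ℓ_C(p) ≤ 2·ℓ_H(p), where ℓ_H(p) = |{i : p(i) ≠ i}|/n is the normalized Hamming length.) -/
/-!
A pair of fixed points `i < j` is never an inversion, so every inversion has an endpoint in the
support, and each point of the support is an endpoint of at most `n - 1` pairs `i < j`.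
-/

open Finset

namespace Equiv.Perm

variable {α : Type*} [Fintype α] [LinearOrder α]

def inversions (p : Perm α) : Finset (α × α) :=
  univ.filter fun ij => ij.1 < ij.2 ∧ p ij.2 < p ij.1

def pairsThrough (a : α) : Finset (α × α) :=
  (univ.erase a).image fun b => (min a b, max a b)

theorem card_pairsThrough_le (a : α) : #(pairsThrough a) ≤ Fintype.card α - 1 :=
  (card_image_le).trans_eq <| by rw [card_erase_of_mem (mem_univ a), card_univ]

theorem mem_support_or_mem_support_of_mem_inversions {p : Perm α} {ij : α × α}
    (h : ij ∈ p.inversions) : ij.1 ∈ p.support ∨ ij.2 ∈ p.support := by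
  obtain ⟨hlt, hinv⟩ := (mem_filter.1 h).2
  simp only [mem_support]
  by_contra! hfix
  rw [hfix.1, hfix.2] at hinv
  exact lt_asymm hlt hinv

theorem inversions_subset_biUnion_pairsThrough (p : Perm α) :
    p.inversions ⊆ p.support.biUnion pairsThrough := by
  rintro ⟨i, j⟩ h
  have hlt : i < j := (mem_filter.1 h).2.1
  rw [mem_biUnion]
  rcases mem_support_or_mem_support_of_mem_inversions h with hi | hj
  · exact ⟨i, hi, mem_image.2 ⟨j, mem_erase.2 ⟨hlt.ne', mem_univ j⟩,
      by rw [min_eq_left hlt.le, max_eq_right hlt.le]⟩⟩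
  · exact ⟨j, hj, mem_image.2 ⟨i, mem_erase.2 ⟨hlt.ne, mem_univ i⟩,
      by rw [min_eq_right hlt.le, max_eq_left hlt.le]⟩⟩

theorem card_inversions_le (p : Perm α) :
    #p.inversions ≤ (Fintype.card α - 1) * #p.support :=
  calc #p.inversions ≤ #(p.support.biUnion pairsThrough) :=
        card_le_card (inversions_subset_biUnion_pairsThrough p)
    _ ≤ #p.support * (Fintype.card α - 1) :=
        card_biUnion_le_card_mul _ _ _ fun a _ => card_pairsThrough_le a
    _ = (Fintype.card α - 1) * #p.support := mul_comm _ _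

end Equiv.Perm

theorem stmt_1 (n : ℕ) (p : Equiv.Perm (Fin n)) :
    (Finset.univ.filter (fun ij : Fin n × Fin n => ij.1 < ij.2 ∧ p ij.2 < p ij.1)).card ≤
      (n - 1) * (Finset.univ.filter (fun i : Fin n => p i ≠ i)).card := by
  have h := p.card_inversions_le
  rw [Fintype.card_fin] at h
  exact h
end

section
/- Let ω be a nonprincipal ultrafilter on ℕ, let n : ℕ → ℕ satisfy n(k) ≥ 2 for all k, and let p(k) be a permutation of Fin (n(k)) for each k. Then the normalized Coxeter lengths ℓ_C(p(k)) = 2·inv(p(k))/(n(k)(n(k)−1)) tend to 0 along ω if and only if the normalized total displacements T(p(k)) = (2/(n(k)(n(k)−1))) · Σ_i |p(k)(i) − i| tend to 0 along ω. -/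
/-!
The inversion count `I` and the total displacement `D = ∑ dᵢ`, `dᵢ = |p i - i|`, of a
permutation satisfy `D ≤ 2 I ≤ 8 D` (Diaconis–Graham have the sharper `I ≤ D`), so the two
normalised quantities are `Θ` of each other. `p i - i` is the number of inversions `(i, j)`
minus the number of inversions `(j, i)`, whence `D ≤ 2 I`. Conversely an inversion `(i, j)` has
`j - i ≤ dᵢ + dⱼ`, so `j ≤ i + 2 dᵢ` or `j ≤ i + 2 dⱼ`; each index is the left end of at most
`2 dᵢ` pairs of the first kind and the right end of at most `2 dⱼ` of the second, whence
`I ≤ 4 D`.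
-/

open Finset Filter Asymptotics

theorem Finset.card_filter_prod_eq_sum_fst {α β : Type*} [Fintype α] [Fintype β]
    (P : α → β → Prop) [∀ a b, Decidable (P a b)] :
    #{x : α × β | P x.1 x.2} = ∑ a, #{b | P a b} := by
  simp only [card_filter, Fintype.sum_prod_type]

theorem Finset.card_filter_prod_eq_sum_snd {α β : Type*} [Fintype α] [Fintype β]
    (P : α → β → Prop) [∀ a b, Decidable (P a b)] :
    #{x : α × β | P x.1 x.2} = ∑ b, #{a | P a b} := by
  simp only [card_filter, Fintype.sum_prod_type_right]

namespace Fin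

variable {n : ℕ}

theorem card_filter_lt_and_le_add (i : Fin n) (m : ℕ) :
    #{j : Fin n | i < j ∧ (j : ℕ) ≤ i + m} ≤ m := by
  calc #{j : Fin n | i < j ∧ (j : ℕ) ≤ i + m}
      ≤ #(Ioc (i : ℕ) (i + m)) :=
        card_le_card_of_injOn Fin.val (fun j hj => by simp at hj ⊢; omega) Fin.val_injective.injOn
    _ = m := by simp

theorem card_filter_gt_and_le_add (j : Fin n) (m : ℕ) :
    #{i : Fin n | i < j ∧ (j : ℕ) ≤ i + m} ≤ m := by
  calc #{i : Fin n | i < j ∧ (j : ℕ) ≤ i + m}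
      ≤ #(Ico ((j : ℕ) - m) j) :=
        card_le_card_of_injOn Fin.val (fun i hi => by simp at hi ⊢; omega) Fin.val_injective.injOn
    _ ≤ m := by rw [Nat.card_Ico]; omega

end Fin

namespace Equiv.Perm

variable {n : ℕ} (p : Perm (Fin n))

def inversionSet : Finset (Fin n × Fin n) := {ij | ij.1 < ij.2 ∧ p ij.2 < p ij.1}

def displacement (i : Fin n) : ℕ := ((p i : ℤ) - i).natAbs

def totalDisplacement : ℕ := ∑ i, p.displacement i

theorem card_filter_apply_lt (i : Fin n) : #{j | p j < p i} = p i := by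
  rw [card_equiv p (t := {v | v < p i}) (by simp), filter_gt_eq_Iio, Fin.card_Iio]

theorem apply_sub_eq_card_sub_card (i : Fin n) :
    ((p i : ℕ) : ℤ) - (i : ℕ) = #{j | i < j ∧ p j < p i} - #{j | j < i ∧ p i < p j} := by
  have hinj : ∀ j, p j = p i ↔ j = i := fun j => p.injective.eq_iff
  have h1 := p.card_filter_apply_lt i
  have h2 : #{j | j < i} = (i : ℕ) := by rw [filter_gt_eq_Iio, Fin.card_Iio]
  simp only [card_filter] at h1 h2 ⊢
  rw [← h1, ← h2]
  push_cast
  rw [← sum_sub_distrib, ← sum_sub_distrib]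
  refine sum_congr rfl fun j _ => ?_
  rcases lt_trichotomy j i with h | rfl | h
  · have : p j ≠ p i := by simpa [hinj] using h.ne
    rcases this.lt_or_gt with h' | h' <;> simp [h, h', h.not_gt, h'.not_gt]
  · simp
  · have : p j ≠ p i := by simpa [hinj] using h.ne'
    rcases this.lt_or_gt with h' | h' <;> simp [h, h', h.not_gt, h'.not_gt]

theorem displacement_le (i : Fin n) :
    p.displacement i ≤ #{j | i < j ∧ p j < p i} + #{j | j < i ∧ p i < p j} := by
  have := p.apply_sub_eq_card_sub_card i
  unfold displacement
  omega

theorem totalDisplacement_le_two_mul_card_inversionSet :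
    p.totalDisplacement ≤ 2 * #p.inversionSet := by
  have fst : #p.inversionSet = ∑ i, #{j | i < j ∧ p j < p i} :=
    card_filter_prod_eq_sum_fst fun i j => i < j ∧ p j < p i
  have snd : #p.inversionSet = ∑ i, #{j | j < i ∧ p i < p j} :=
    card_filter_prod_eq_sum_snd fun j i => j < i ∧ p i < p j
  calc p.totalDisplacement
      ≤ ∑ i, (#{j | i < j ∧ p j < p i} + #{j | j < i ∧ p i < p j}) :=
        sum_le_sum fun i _ => p.displacement_le i
    _ = 2 * #p.inversionSet := by rw [sum_add_distrib, ← fst, ← snd, two_mul]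

theorem le_add_displacement_add_displacement {i j : Fin n} (hij : i < j) (hp : p j < p i) :
    (j : ℕ) ≤ i + p.displacement i + p.displacement j := by
  have : (p j : ℕ) < p i := hp
  unfold displacement
  omega

theorem card_inversionSet_le_four_mul_totalDisplacement :
    #p.inversionSet ≤ 4 * p.totalDisplacement := by
  have hsub : p.inversionSet ⊆
      ({ij | ij.1 < ij.2 ∧ (ij.2 : ℕ) ≤ ij.1 + 2 * p.displacement ij.1} :
          Finset (Fin n × Fin n)) ∪
        ({ij | ij.1 < ij.2 ∧ (ij.2 : ℕ) ≤ ij.1 + 2 * p.displacement ij.2} :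
          Finset (Fin n × Fin n)) := by
    rintro ⟨i, j⟩ hij
    simp only [inversionSet, mem_filter, mem_univ, true_and, mem_union] at hij ⊢
    have := p.le_add_displacement_add_displacement hij.1 hij.2
    omega
  have hfst := card_filter_prod_eq_sum_fst
    fun i (j : Fin n) => i < j ∧ (j : ℕ) ≤ i + 2 * p.displacement i
  have hsnd := card_filter_prod_eq_sum_snd
    fun (i : Fin n) j => i < j ∧ (j : ℕ) ≤ i + 2 * p.displacement j
  calc #p.inversionSet
      ≤ ∑ i, 2 * p.displacement i + ∑ j, 2 * p.displacement j := by
        refine (card_le_card hsub).trans ((card_union_le _ _).trans (add_le_add ?_ ?_))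
        · exact hfst ▸ sum_le_sum fun i _ => Fin.card_filter_lt_and_le_add i _
        · exact hsnd ▸ sum_le_sum fun j _ => Fin.card_filter_gt_and_le_add j _
    _ = 4 * p.totalDisplacement := by rw [← mul_sum, totalDisplacement]; ring

end Equiv.Perm

theorem stmt_4_general (ω : Ultrafilter ℕ)
    (n : ℕ → ℕ) (p : ∀ k, Equiv.Perm (Fin (n k))) :
    Filter.Tendsto
        (fun k => 2 * ((Finset.univ.filter
            (fun ij : Fin (n k) × Fin (n k) => ij.1 < ij.2 ∧ p k ij.2 < p k ij.1)).card : ℝ) /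
          ((n k : ℝ) * ((n k : ℝ) - 1)))
        (ω : Filter ℕ) (nhds 0) ↔
      Filter.Tendsto
        (fun k => (2 / ((n k : ℝ) * ((n k : ℝ) - 1))) *
          ∑ i : Fin (n k), (|((p k i : ℕ) : ℤ) - ((i : ℕ) : ℤ)| : ℝ))
        (ω : Filter ℕ) (nhds 0) := by
  have hsum (k : ℕ) : ∑ i : Fin (n k), (|((p k i : ℕ) : ℤ) - ((i : ℕ) : ℤ)| : ℝ) =
      (p k).totalDisplacement := by
    simp only [Equiv.Perm.totalDisplacement, Equiv.Perm.displacement, Nat.cast_sum,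
      Nat.cast_natAbs]
    push_cast
    rfl
  have hΘ : (fun k => 2 * (#(p k).inversionSet : ℝ)) =Θ[ω]
      fun k => 2 * ((p k).totalDisplacement : ℝ) := by
    refine ⟨IsBigO.of_bound 4 (Eventually.of_forall fun k => ?_),
      IsBigO.of_bound 2 (Eventually.of_forall fun k => ?_)⟩
    · have : (#(p k).inversionSet : ℝ) ≤ 4 * (p k).totalDisplacement := by
        exact_mod_cast (p k).card_inversionSet_le_four_mul_totalDisplacement
      rw [Real.norm_of_nonneg (by positivity), Real.norm_of_nonneg (by positivity)]
      linarith
    · have : ((p k).totalDisplacement : ℝ) ≤ 2 * #(p k).inversionSet := by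
        exact_mod_cast (p k).totalDisplacement_le_two_mul_card_inversionSet
      rw [Real.norm_of_nonneg (by positivity), Real.norm_of_nonneg (by positivity)]
      linarith
  simp_rw [hsum, ← mul_div_right_comm]
  exact (hΘ.div (isTheta_refl _ _)).tendsto_zero_iff

theorem stmt_4 (ω : Ultrafilter ℕ) (hω : (ω : Filter ℕ) ≤ Filter.cofinite)
    (n : ℕ → ℕ) (hn : ∀ k, 2 ≤ n k) (p : ∀ k, Equiv.Perm (Fin (n k))) :
    Filter.Tendsto
        (fun k => 2 * ((Finset.univ.filter
            (fun ij : Fin (n k) × Fin (n k) => ij.1 < ij.2 ∧ p k ij.2 < p k ij.1)).card : ℝ) /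
          ((n k : ℝ) * ((n k : ℝ) - 1)))
        (ω : Filter ℕ) (nhds 0) ↔
      Filter.Tendsto
        (fun k => (2 / ((n k : ℝ) * ((n k : ℝ) - 1))) *
          ∑ i : Fin (n k), (|((p k i : ℕ) : ℤ) - ((i : ℕ) : ℤ)| : ℝ))
        (ω : Filter ℕ) (nhds 0) :=
  stmt_4_general ω n p
end

section
/- For all permutations p, q of Fin n, |inv(p) − inv(q)| ≤ (n − 1) · |{i : p(i) ≠ q(i)}| (the absolute value taken in ℤ). In particular the normalized Coxeter length ℓ_C descends to a well-defined function on the metric ultraproduct of symmetric groups with respect to the normalized Hamming distance. -/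
open Finset

/-! Changing a function at a single point `d` can only change whether the pairs through `d` are
inversions, and there are `n - 1` such pairs; so each point where `p` and `q` differ accounts for
at most `n - 1` inversions of one that are not inversions of the other. -/

section

variable {α β : Type*} [LinearOrder α] [Fintype α] [LinearOrder β]

def inversions (f : α → β) : Finset (α × α) :=
  univ.filter fun ij => ij.1 < ij.2 ∧ f ij.2 < f ij.1

lemma mem_inversions {f : α → β} {ij : α × α} :
    ij ∈ inversions f ↔ ij.1 < ij.2 ∧ f ij.2 < f ij.1 := by
  simp [inversions]

def incidentPairs (d : α) : Finset (α × α) :=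
  (univ.erase d).image fun k => (min d k, max d k)

lemma card_incidentPairs_le (d : α) : (#(incidentPairs d) : ℤ) ≤ Fintype.card α - 1 := by
  have hpos : 0 < Fintype.card α := Fintype.card_pos_iff.mpr ⟨d⟩
  calc (#(incidentPairs d) : ℤ) ≤ #(univ.erase d) := by
        exact_mod_cast card_image_le
    _ = Fintype.card α - 1 := by
        rw [card_erase_of_mem (mem_univ d), card_univ, Nat.cast_pred hpos]

lemma inversions_sdiff_subset (f g : α → β) :
    inversions f \ inversions g ⊆ ({i | f i ≠ g i} : Finset α).biUnion incidentPairs := by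
  rintro ⟨i, j⟩ hij
  simp only [mem_sdiff, mem_inversions, not_and] at hij
  obtain ⟨⟨hlt, hf⟩, hg⟩ := hij
  have hdiff : f i ≠ g i ∨ f j ≠ g j := by
    by_contra! h
    exact hg hlt (by rwa [← h.1, ← h.2])
  simp only [mem_biUnion, mem_filter, mem_univ, true_and, incidentPairs, mem_image, mem_erase]
  rcases hdiff with hi | hj
  · exact ⟨i, hi, j, ⟨hlt.ne', trivial⟩, by simp [hlt.le]⟩
  · exact ⟨j, hj, i, ⟨hlt.ne, trivial⟩, by simp [hlt.le]⟩

lemma card_inversions_sub_le (f g : α → β) :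
    (#(inversions f) : ℤ) - #(inversions g) ≤
      (Fintype.card α - 1) * #({i | f i ≠ g i} : Finset α) := by
  have hsdiff : (#(inversions f \ inversions g) : ℤ) ≤
      (Fintype.card α - 1) * #({i | f i ≠ g i} : Finset α) := calc
    _ ≤ (#(({i | f i ≠ g i} : Finset α).biUnion incidentPairs) : ℤ) := by
        exact_mod_cast card_le_card (inversions_sdiff_subset f g)
    _ ≤ ∑ d ∈ ({i | f i ≠ g i} : Finset α), (#(incidentPairs d) : ℤ) := by
        exact_mod_cast card_biUnion_le
    _ ≤ ∑ _d ∈ ({i | f i ≠ g i} : Finset α), ((Fintype.card α : ℤ) - 1) :=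
        sum_le_sum fun d _ => card_incidentPairs_le d
    _ = _ := by rw [sum_const, nsmul_eq_mul, mul_comm]
  have : #(inversions f) ≤ #(inversions f \ inversions g) + #(inversions g) :=
    card_le_card_sdiff_add_card
  omega

lemma abs_card_inversions_sub_le (f g : α → β) :
    |(#(inversions f) : ℤ) - #(inversions g)| ≤
      (Fintype.card α - 1) * #({i | f i ≠ g i} : Finset α) := by
  rw [abs_sub_le_iff]
  refine ⟨card_inversions_sub_le f g, ?_⟩
  simpa only [ne_comm] using card_inversions_sub_le g f

end

theorem stmt_6 (n : ℕ) (p q : Equiv.Perm (Fin n)) :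
    |((Finset.univ.filter
          (fun ij : Fin n × Fin n => ij.1 < ij.2 ∧ p ij.2 < p ij.1)).card : ℤ) -
        ((Finset.univ.filter
          (fun ij : Fin n × Fin n => ij.1 < ij.2 ∧ q ij.2 < q ij.1)).card : ℤ)| ≤
      ((n : ℤ) - 1) * ((Finset.univ.filter (fun i : Fin n => p i ≠ q i)).card : ℤ) := by
  simpa only [inversions, Fintype.card_fin] using abs_card_inversions_sub_le p q
end

section
/- For every permutation p of Fin n, Σ_{x ∈ Fin n} |p(Iic x) Δ (Iic x)| = Σ_{y ∈ Fin n} |p(y) − y|, where Iic x = {y ∈ Fin n : y ≤ x}, p(Iic x) is its image under p, Δ denotes symmetric difference of finite sets, |·| on the left is cardinality and |p(y) − y| on the right is the absolute value of the difference in ℤ. -/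
open Finset
open scoped symmDiff

section LinearOrder

variable {α : Type*} [LinearOrder α] [Fintype α] [LocallyFiniteOrder α]

lemma filter_not_le_iff_le_eq_Ico (a b : α) :
    ({x | ¬(a ≤ x ↔ b ≤ x)} : Finset α) = Ico (min a b) (max a b) := by
  ext x
  simp only [mem_filter, mem_univ, true_and, mem_Ico, min_le_iff, ← not_le, max_le_iff]
  tauto

variable [LocallyFiniteOrderBot α]

/-- Double counting: `y` lies in the `x`-th symmetric difference iff `x` lies between `p⁻¹ y`
and `y`. -/
lemma sum_card_symmDiff_image_Iic (p : Equiv.Perm α) :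
    ∑ x, #((Iic x).image p ∆ Iic x) = ∑ y, #(Ico (min y (p y)) (max y (p y))) := by
  have hsymmDiff (x : α) : (Iic x).image p ∆ Iic x =
      univ.bipartiteAbove (fun x y ↦ ¬(p.symm y ≤ x ↔ y ≤ x)) x := by
    ext y
    rw [← Equiv.coe_toEmbedding, ← map_eq_image, mem_symmDiff, mem_map_equiv, mem_Iic, mem_Iic,
      mem_bipartiteAbove]
    simp only [mem_univ, true_and]
    tauto
  simp_rw [hsymmDiff, sum_card_bipartiteAbove_eq_sum_card_bipartiteBelow]
  rw [← Equiv.sum_comp p]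
  simp [bipartiteBelow, filter_not_le_iff_le_eq_Ico]

end LinearOrder

lemma Fin.card_Ico_min_max {n : ℕ} (a b : Fin n) :
    #(Ico (min a b) (max a b)) = (((b : ℕ) : ℤ) - (a : ℕ)).natAbs := by
  rcases le_total a b with h | h
  · rw [min_eq_left h, max_eq_right h, Fin.card_Ico]
    omega
  · rw [min_eq_right h, max_eq_left h, Fin.card_Ico]
    omega

theorem stmt_7 (n : ℕ) (p : Equiv.Perm (Fin n)) :
    ∑ x : Fin n, (symmDiff ((Finset.Iic x).image p) (Finset.Iic x)).card =
      ∑ y : Fin n, (((p y : ℕ) : ℤ) - ((y : ℕ) : ℤ)).natAbs := by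
  simp only [sum_card_symmDiff_image_Iic, Fin.card_Ico_min_max]
end

section
/- Let m ≤ n, let p : Fin m → Equiv.Perm (Fin n) be a family of permutations of Fin n, and let ε : Fin m → Bool. Assume that for every x ∈ Fin n the map j ↦ p(j)(x) is injective on Fin m. Then Σ over all finsets s of Fin n of |{x ∈ Fin n : for all j, (p(j)(x) ∈ s ↔ ε(j) = true)}| equals 2^(n−m) · n. -/
/-!
Double counting: the sum equals `∑ x, #{s | ∀ j, p j x ∈ s ↔ ε j}`. For a fixed `x` the points
`p j x` are `m` distinct elements, and the condition prescribes `s` on exactly these points, so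
it leaves `s` free on the remaining `n - m` points: each summand is `2 ^ (n - m)`.
-/

open Finset

theorem card_filter_inter_eq {α : Type*} [Fintype α] [DecidableEq α] {T A : Finset α}
    (hA : A ⊆ T) : #{s : Finset α | s ∩ T = A} = 2 ^ (Fintype.card α - #T) := by
  rw [← card_compl, ← card_powerset]
  refine card_nbij' (· \ T) (· ∪ A) ?_ ?_ ?_ ?_
  · intro s _
    simp
  · intro u hu
    have hdisj : Disjoint u T := by simpa [← coe_compl, subset_compl_iff_disjoint_right] using hu
    simp only [coe_filter, mem_univ, true_and, Set.mem_ofPred_eq, union_inter_distrib_right,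
      disjoint_iff_inter_eq_empty.1 hdisj, inter_eq_left.2 hA, empty_union]
  · intro s hs
    simp only [coe_filter, mem_univ, true_and, Set.mem_ofPred_eq] at hs
    simp [← hs, sdiff_union_inter]
  · intro u hu
    have hdisj : Disjoint u T := by simpa [← coe_compl, subset_compl_iff_disjoint_right] using hu
    simp [union_sdiff_distrib, sdiff_eq_empty_iff_subset.2 hA, hdisj.sdiff_eq_left]

theorem forall_mem_iff_iff_inter_map_eq {ι α : Type*} [Fintype ι] [DecidableEq α] (f : ι ↪ α)
    (q : ι → Prop) [DecidablePred q] (s : Finset α) :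
    (∀ j, f j ∈ s ↔ q j) ↔ s ∩ univ.map f = (univ.filter q).map f := by
  simp only [Finset.ext_iff, mem_inter, mem_map, mem_univ, true_and, mem_filter]
  constructor
  · rintro h y
    constructor
    · rintro ⟨hy, j, rfl⟩
      exact ⟨j, (h j).1 hy, rfl⟩
    · rintro ⟨j, hj, rfl⟩
      exact ⟨(h j).2 hj, j, rfl⟩
  · intro h j
    constructor
    · intro hj
      obtain ⟨j', hj', hjj'⟩ := (h (f j)).1 ⟨hj, j, rfl⟩
      rwa [← f.injective hjj']
    · intro hj
      exact ((h (f j)).2 ⟨j, hj, rfl⟩).1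

theorem card_filter_forall_mem_iff {ι α : Type*} [Fintype ι] [Fintype α] [DecidableEq α]
    (f : ι ↪ α) (q : ι → Prop) [DecidablePred q] :
    #{s : Finset α | ∀ j, f j ∈ s ↔ q j} = 2 ^ (Fintype.card α - Fintype.card ι) := by
  simp_rw [forall_mem_iff_iff_inter_map_eq]
  rw [card_filter_inter_eq (map_subset_map.2 (filter_subset _ _)), card_map, card_univ]

theorem stmt_10_general (m n : ℕ) (p : Fin m → Equiv.Perm (Fin n))
    (ε : Fin m → Bool)
    (hinj : ∀ x : Fin n, Function.Injective (fun j : Fin m => p j x)) :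
    ∑ s : Finset (Fin n),
        (Finset.univ.filter (fun x : Fin n => ∀ j : Fin m, (p j x ∈ s ↔ ε j = true))).card =
      2 ^ (n - m) * n := by
  have hcount (x : Fin n) : #{s : Finset (Fin n) | ∀ j, p j x ∈ s ↔ ε j = true} = 2 ^ (n - m) := by
    simpa using card_filter_forall_mem_iff ⟨fun j => p j x, hinj x⟩ (ε · = true)
  calc ∑ s : Finset (Fin n), #{x | ∀ j, p j x ∈ s ↔ ε j = true}
      = ∑ x : Fin n, #{s : Finset (Fin n) | ∀ j, p j x ∈ s ↔ ε j = true} :=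
        sum_card_bipartiteAbove_eq_sum_card_bipartiteBelow _
    _ = 2 ^ (n - m) * n := by simp [hcount, mul_comm]

theorem stmt_10 (m n : ℕ) (hmn : m ≤ n) (p : Fin m → Equiv.Perm (Fin n))
    (ε : Fin m → Bool)
    (hinj : ∀ x : Fin n, Function.Injective (fun j : Fin m => p j x)) :
    ∑ s : Finset (Fin n),
        (Finset.univ.filter (fun x : Fin n => ∀ j : Fin m, (p j x ∈ s ↔ ε j = true))).card =
      2 ^ (n - m) * n :=
  stmt_10_general m n p ε hinj
end

section
/- Let 2m ≤ n, let p : Fin m → Equiv.Perm (Fin n) be a family of permutations of Fin n, and let ε : Fin m → Bool. Assume that for every x ∈ Fin n the map j ↦ p(j)(x) is injective on Fin m. Then Σ over all finsets s of Fin n of (|{x ∈ Fin n : for all j, (p(j)(x) ∈ s ↔ ε(j) = true)}|)² is at most 2^(n−2m) · n² + 2^(n−m) · n · m². -/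
/-!
Expanding the square, the sum counts triples `(x, y, s)` such that both `x` and `y` have pattern
`ε` in `s`. The pattern at `x` prescribes `s` on the `m`-point set `{p j x}_j` and nothing else,
so for fixed `x, y` there are at most `2 ^ (n - #({p j x}_j ∪ {p j y}_j))` such `s`. The union has
`2m` points unless the two sets meet, which forces `y = (p j')⁻¹ (p j x)` for some `j, j'`: at most
`m²` values of `y` for each `x`, each contributing at most `2 ^ (n - m)`.
-/

open Finset Function

theorem sum_card_filter_sq {α β : Type*} [Fintype α] [Fintype β]
    (P : α → β → Prop) [∀ x s, Decidable (P x s)] :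
    ∑ s, #{x | P x s} ^ 2 = ∑ x, ∑ y, #{s | P x s ∧ P y s} := by
  simp only [card_filter, sq, sum_mul_sum, ite_zero_mul_ite_zero, one_mul]
  rw [sum_comm]
  exact sum_congr rfl fun x _ => sum_comm

theorem card_filter_le_two_pow_of_forall_mem_iff {α : Type*} [Fintype α] [DecidableEq α]
    (P : Finset α → Prop) [DecidablePred P] (T : Finset α)
    (h : ∀ s s', P s → P s' → ∀ a ∈ T, (a ∈ s ↔ a ∈ s')) :
    #{s | P s} ≤ 2 ^ (Fintype.card α - #T) := by
  have hmaps : ∀ s ∈ ({s | P s} : Finset _), s \ T ∈ (univ \ T).powerset := fun s _ =>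
    mem_powerset.2 (sdiff_subset_sdiff (subset_univ s) le_rfl)
  have hinj : Set.InjOn (· \ T) ({s | P s} : Finset (Finset α)) := by
    intro s hs s' hs' heq
    simp only [coe_filter, mem_univ, true_and, Set.mem_ofPred_eq] at hs hs'
    ext a
    by_cases ha : a ∈ T
    · exact h s s' hs hs' a ha
    · simpa [ha] using congrArg (a ∈ ·) heq
  calc #{s | P s} ≤ #(univ \ T).powerset := card_le_card_of_injOn _ hmaps hinj
    _ = 2 ^ (Fintype.card α - #T) := by
      rw [card_powerset, card_univ_sdiff]

section Pattern

variable {α ι : Type*} [DecidableEq α] [Fintype ι] (p : ι → Equiv.Perm α) (ε : ι → Bool)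

/-- The points whose membership in `s` the pattern condition at `x` constrains. -/
def patternSupport (x : α) : Finset α := univ.image fun j => p j x

variable {p}

theorem card_patternSupport {x : α} (hinj : Injective fun j => p j x) :
    #(patternSupport p x) = Fintype.card ι := by
  rw [patternSupport, card_image_of_injective _ hinj, card_univ]

variable [Fintype α] [∀ x (s : Finset α), Decidable (∀ j, (p j x ∈ s ↔ ε j = true))]

theorem card_filter_pattern_pair_le (x y : α) :
    #{s : Finset α | (∀ j, (p j x ∈ s ↔ ε j = true)) ∧ (∀ j, (p j y ∈ s ↔ ε j = true))} ≤
      2 ^ (Fintype.card α - #(patternSupport p x ∪ patternSupport p y)) := by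
  apply card_filter_le_two_pow_of_forall_mem_iff
  rintro s s' ⟨hsx, hsy⟩ ⟨hs'x, hs'y⟩ a ha
  simp only [patternSupport, mem_union, mem_image, mem_univ, true_and] at ha
  rcases ha with ⟨j, rfl⟩ | ⟨j, rfl⟩
  · rw [hsx, hs'x]
  · rw [hsy, hs'y]

theorem card_filter_not_disjoint_patternSupport_le (x : α) :
    #{y | ¬Disjoint (patternSupport p x) (patternSupport p y)} ≤ Fintype.card ι ^ 2 := by
  have hsub : ({y | ¬Disjoint (patternSupport p x) (patternSupport p y)} : Finset α) ⊆
      univ.image fun jj : ι × ι => (p jj.2)⁻¹ (p jj.1 x) := by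
    intro y hy
    obtain ⟨_, hax, hay⟩ := not_disjoint_iff.1 (mem_filter.1 hy).2
    simp only [patternSupport, mem_image, mem_univ, true_and] at hax hay
    obtain ⟨j, rfl⟩ := hax
    obtain ⟨j', hj'⟩ := hay
    exact mem_image.2 ⟨(j, j'), mem_univ _, by simp [← hj']⟩
  calc _ ≤ _ := card_le_card hsub
    _ ≤ #(univ : Finset (ι × ι)) := card_image_le
    _ = Fintype.card ι ^ 2 := by simp [sq]

theorem sum_card_filter_pattern_pair_le (hinj : ∀ x, Injective fun j => p j x) (x : α) :
    ∑ y, #{s : Finset α | (∀ j, (p j x ∈ s ↔ ε j = true)) ∧ (∀ j, (p j y ∈ s ↔ ε j = true))} ≤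
      2 ^ (Fintype.card α - 2 * Fintype.card ι) * Fintype.card α +
        2 ^ (Fintype.card α - Fintype.card ι) * Fintype.card ι ^ 2 := by
  set N := Fintype.card α
  set m := Fintype.card ι
  rw [← sum_filter_add_sum_filter_not univ
    fun y => Disjoint (patternSupport p x) (patternSupport p y)]
  gcongr
  · calc _ ≤ #{y | Disjoint (patternSupport p x) (patternSupport p y)} • 2 ^ (N - 2 * m) := by
          refine sum_le_card_nsmul _ _ _ fun y hy => ?_
          have hunion := card_union_of_disjoint (mem_filter.1 hy).2
          rw [card_patternSupport (hinj x), card_patternSupport (hinj y), ← two_mul] at hunion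
          simpa [hunion] using card_filter_pattern_pair_le (p := p) ε x y
      _ ≤ N • 2 ^ (N - 2 * m) := by gcongr; exact card_le_univ _
      _ = 2 ^ (N - 2 * m) * N := by rw [smul_eq_mul, mul_comm]
  · calc _ ≤ #{y | ¬Disjoint (patternSupport p x) (patternSupport p y)} • 2 ^ (N - m) := by
          refine sum_le_card_nsmul _ _ _ fun y _ => (card_filter_pattern_pair_le ε x y).trans ?_
          have : m ≤ #(patternSupport p x ∪ patternSupport p y) :=
            (card_patternSupport (hinj x)).symm.trans_le (card_le_card subset_union_left)
          exact Nat.pow_le_pow_right two_pos (by omega)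
      _ ≤ m ^ 2 • 2 ^ (N - m) := by gcongr; exact card_filter_not_disjoint_patternSupport_le x
      _ = 2 ^ (N - m) * m ^ 2 := by rw [smul_eq_mul, mul_comm]

end Pattern

theorem stmt_12_general (m n : ℕ) (p : Fin m → Equiv.Perm (Fin n))
    (ε : Fin m → Bool)
    (hinj : ∀ x : Fin n, Function.Injective (fun j : Fin m => p j x)) :
    ∑ s : Finset (Fin n),
        ((Finset.univ.filter
          (fun x : Fin n => ∀ j : Fin m, (p j x ∈ s ↔ ε j = true))).card) ^ 2 ≤
      2 ^ (n - 2 * m) * n ^ 2 + 2 ^ (n - m) * n * m ^ 2 := by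
  rw [sum_card_filter_sq fun (x : Fin n) (s : Finset (Fin n)) => ∀ j, (p j x ∈ s ↔ ε j = true)]
  calc _ ≤ ∑ _x : Fin n, (2 ^ (n - 2 * m) * n + 2 ^ (n - m) * m ^ 2) := by
        refine sum_le_sum fun x _ => ?_
        simpa using sum_card_filter_pattern_pair_le ε hinj x
    _ = 2 ^ (n - 2 * m) * n ^ 2 + 2 ^ (n - m) * n * m ^ 2 := by
        rw [sum_const, card_univ, Fintype.card_fin, smul_eq_mul]
        ring

theorem stmt_12 (m n : ℕ) (hmn : 2 * m ≤ n) (p : Fin m → Equiv.Perm (Fin n))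
    (ε : Fin m → Bool)
    (hinj : ∀ x : Fin n, Function.Injective (fun j : Fin m => p j x)) :
    ∑ s : Finset (Fin n),
        ((Finset.univ.filter
          (fun x : Fin n => ∀ j : Fin m, (p j x ∈ s ↔ ε j = true))).card) ^ 2 ≤
      2 ^ (n - 2 * m) * n ^ 2 + 2 ^ (n - m) * n * m ^ 2 :=
  stmt_12_general m n p ε hinj
end

section
/- Let p be a permutation of Fin n and let B, C be finsets of Fin n such that C ⊆ B, every x ∈ B satisfies p(x) ≠ x, the image p(C) is disjoint from C, and C is maximal with this property in B, i.e. for every x ∈ B \ C, the image p(insert x C) is not disjoint from insert x C. Then |B| ≤ 3 · |C|. -/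
/-!
If `x ∈ B \ C`, maximality yields `a, b ∈ insert x C` with `p a = b`. Since `p` has no fixed
point on `B` and `p(C)` misses `C`, exactly one of `a, b` is `x`, so `x ∈ p(C)` or `x ∈ p⁻¹(C)`.
Hence `B ⊆ C ∪ p(C) ∪ p⁻¹(C)`, a union of three sets of size `|C|`.
-/

open Finset

section

variable {α : Type*} [DecidableEq α]

theorem card_union_image_union_image_le (f g : α → α) (s : Finset α) :
    #(s ∪ s.image f ∪ s.image g) ≤ 3 * #s :=
  calc #(s ∪ s.image f ∪ s.image g) ≤ #s + #(s.image f) + #(s.image g) :=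
        (card_union_le _ _).trans (Nat.add_le_add_right (card_union_le _ _) _)
    _ ≤ #s + #s + #s := add_le_add (add_le_add le_rfl card_image_le) card_image_le
    _ = 3 * #s := by ring

theorem mem_union_image_perm_of_not_disjoint_insert (p : Equiv.Perm α) {C : Finset α}
    {x : α} (hx : p x ≠ x) (hdisj : Disjoint (C.image p) C)
    (hins : ¬ Disjoint ((insert x C).image p) (insert x C)) :
    x ∈ C ∪ C.image p ∪ C.image p.symm := by
  obtain ⟨_, hy, hpa⟩ := not_disjoint_iff.mp hins
  obtain ⟨a, ha, rfl⟩ := mem_image.mp hy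
  simp only [mem_insert] at ha hpa
  simp only [mem_union, mem_image]
  rcases ha with rfl | ha
  · rcases hpa with hfix | hpa
    · exact absurd hfix hx
    · exact Or.inr ⟨p a, hpa, p.symm_apply_apply a⟩
  · rcases hpa with rfl | hpa
    · exact Or.inl (Or.inr ⟨a, ha, rfl⟩)
    · exact absurd hpa (disjoint_left.mp hdisj (mem_image_of_mem p ha))

end

theorem stmt_13_general (n : ℕ) (p : Equiv.Perm (Fin n)) (B C : Finset (Fin n))
    (hfix : ∀ x ∈ B, p x ≠ x)
    (hdisj : Disjoint (C.image p) C)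
    (hmax : ∀ x ∈ B \ C, ¬ Disjoint ((insert x C).image p) (insert x C)) :
    B.card ≤ 3 * C.card := by
  have hcover : B ⊆ C ∪ C.image p ∪ C.image p.symm := by
    intro x hxB
    by_cases hxC : x ∈ C
    · exact mem_union_left _ (mem_union_left _ hxC)
    · exact mem_union_image_perm_of_not_disjoint_insert p (hfix x hxB) hdisj
        (hmax x (mem_sdiff.mpr ⟨hxB, hxC⟩))
  exact (card_le_card hcover).trans (card_union_image_union_image_le _ _ C)

theorem stmt_13 (n : ℕ) (p : Equiv.Perm (Fin n)) (B C : Finset (Fin n))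
    (hCB : C ⊆ B) (hfix : ∀ x ∈ B, p x ≠ x)
    (hdisj : Disjoint (C.image p) C)
    (hmax : ∀ x ∈ B \ C, ¬ Disjoint ((insert x C).image p) (insert x C)) :
    B.card ≤ 3 * C.card :=
  stmt_13_general n p B C hfix hdisj hmax
end

section
/- Let ω be a nonprincipal ultrafilter on ℕ and let n : ℕ → ℕ tend to infinity. For each k let A(k) be a subset of Fin (n(k)). Then the set S = { t ∈ ℝ : there exists x ∈ Π_k Fin (n(k)) such that {k : x(k) ∈ A(k)} ∈ ω and the sequence ((x(k) : ℝ)/n(k)) tends to t along ω } is a closed subset of ℝ. -/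
/-!
If `t` is a limit of points `s = lim_l g(y)` with `y k ∈ A k` eventually, let `x k` be a point of
`A k` whose image is nearest to `t`. Then `dist (g (x k)) t ≤ dist (g (y k)) t` for every such `y`,
so `g (x k)` is eventually within `dist s t + ε` of `t` for every `ε > 0`, and `t = lim_l g(x)` lies in the set itself.
-/

open Filter Topology

section NearestPoint

variable {ι X : Type*} [PseudoMetricSpace X] {α : ι → Type*}

lemma exists_nearest_selection {A : ∀ k, Set (α k)} (hA : ∀ k, (A k).Finite)
    (g : ∀ k, α k → X) (y₀ : ∀ k, α k) (t : X) :
    ∃ x : ∀ k, α k, ∀ k, ∀ b ∈ A k, x k ∈ A k ∧ dist (g k (x k)) t ≤ dist (g k b) t := by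
  have hnearest : ∀ k, ∃ a : α k, ∀ b ∈ A k, a ∈ A k ∧ dist (g k a) t ≤ dist (g k b) t := by
    intro k
    rcases (A k).eq_empty_or_nonempty with hempty | hne
    · exact ⟨y₀ k, by simp [hempty]⟩
    · obtain ⟨a, ha, hmin⟩ := (A k).exists_min_image (fun a => dist (g k a) t) (hA k) hne
      exact ⟨a, fun b hb => ⟨ha, hmin b hb⟩⟩
  choose x hx using hnearest
  exact ⟨x, hx⟩

theorem isClosed_setOf_exists_tendsto_of_finite (l : Filter ι) {A : ∀ k, Set (α k)}
    (hA : ∀ k, (A k).Finite) (g : ∀ k, α k → X) :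
    IsClosed {t : X | ∃ x : ∀ k, α k, (∀ᶠ k in l, x k ∈ A k) ∧
      Tendsto (fun k => g k (x k)) l (𝓝 t)} := by
  refine isClosed_of_closure_subset fun t ht => ?_
  obtain ⟨-, y₀, hy₀, -⟩ := closure_nonempty_iff.1 ⟨t, ht⟩
  obtain ⟨x, hx⟩ := exists_nearest_selection hA g y₀ t
  refine ⟨x, hy₀.mono fun k hk => (hx k _ hk).1, Metric.tendsto_nhds.2 fun ε hε => ?_⟩
  obtain ⟨s, ⟨y, hyA, hys⟩, hts⟩ := Metric.mem_closure_iff.1 ht (ε / 2) (half_pos hε)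
  filter_upwards [hyA, Metric.tendsto_nhds.1 hys (ε / 2) (half_pos hε)] with k hk hyk
  calc dist (g k (x k)) t ≤ dist (g k (y k)) t := (hx k _ hk).2
    _ ≤ dist (g k (y k)) s + dist s t := dist_triangle _ _ _
    _ < ε / 2 + ε / 2 := add_lt_add hyk (by rwa [dist_comm])
    _ = ε := add_halves ε

end NearestPoint

theorem stmt_15_general (ω : Ultrafilter ℕ)
    (n : ℕ → ℕ)
    (A : ∀ k, Set (Fin (n k))) :
    IsClosed {t : ℝ | ∃ x : ∀ k, Fin (n k),
      {k | x k ∈ A k} ∈ ω ∧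
        Filter.Tendsto (fun k => ((x k : ℕ) : ℝ) / (n k : ℝ)) (ω : Filter ℕ) (nhds t)} :=
  isClosed_setOf_exists_tendsto_of_finite (ω : Filter ℕ) (fun k => (A k).toFinite)
    fun k i => ((i : ℕ) : ℝ) / (n k : ℝ)

theorem stmt_15 (ω : Ultrafilter ℕ) (hω : (ω : Filter ℕ) ≤ Filter.cofinite)
    (n : ℕ → ℕ) (hn : Filter.Tendsto n Filter.atTop Filter.atTop)
    (A : ∀ k, Set (Fin (n k))) :
    IsClosed {t : ℝ | ∃ x : ∀ k, Fin (n k),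
      {k | x k ∈ A k} ∈ ω ∧
        Filter.Tendsto (fun k => ((x k : ℕ) : ℝ) / (n k : ℝ)) (ω : Filter ℕ) (nhds t)} :=
  stmt_15_general ω n A
end
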